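/- Let T be a rooted tree with heavy path decomposition and let P, Q be intersecting paths in T sharing no light edge, with their common vertices lying in the heavy path H whose topmost (closest-to-root) vertex is h₁. Then at least one of P, Q is entirely contained in the subtree rooted at h₁. -/

import Mathlib

open Classical

/-- A rooted tree on `n` nodes, given by a parent function. -/
structure RTree (n : ℕ) where
  parent : Fin n → Fin n
  root : Fin n
  parent_root : parent root = root
  reaches_root : ∀ v, ∃ k, parent^[k] v = root

namespace RTree

variable {n : ℕ}

/-- `a` is an ancestor of `v` (possibly `a = v`). -/
def isAncestor (T : RTree n) (a v : Fin n) : Prop := ∃ k, T.parent^[k] v = a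

/-- The set of nodes in the subtree rooted at `a`. -/
noncomputable def subtree (T : RTree n) (a : Fin n) : Finset (Fin n) :=
  Finset.univ.filter fun v => T.isAncestor a v

/-- Distance from `v` to the root. -/
noncomputable def depth (T : RTree n) (v : Fin n) : ℕ := Nat.find (T.reaches_root v)

/-- `v` is a child of `u`. -/
def isChild (T : RTree n) (v u : Fin n) : Prop := v ≠ T.root ∧ T.parent v = u

/-- `heavy` assigns to each internal node a child of maximum subtree size (heavy child). -/
def IsHeavyChoice (T : RTree n) (heavy : Fin n → Fin n) : Prop :=
  ∀ u : Fin n, (∃ c, T.isChild c u) →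
    T.isChild (heavy u) u ∧
      ∀ c, T.isChild c u → (T.subtree c).card ≤ (T.subtree (heavy u)).card

/-- The edge from `v` to its parent is a light edge. -/
def isLightTop (T : RTree n) (heavy : Fin n → Fin n) (v : Fin n) : Prop :=
  v ≠ T.root ∧ heavy (T.parent v) ≠ v

/-- `{x, y}` is a light edge of `T`. -/
def isLightEdge (T : RTree n) (heavy : Fin n → Fin n) (x y : Fin n) : Prop :=
  (T.isChild x y ∧ heavy y ≠ x) ∨ (T.isChild y x ∧ heavy x ≠ y)

lemma parent_fix_eq_root (T : RTree n) (a : Fin n) (h : T.parent a = a) : a = T.root := by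
  obtain ⟨k, hk⟩ := T.reaches_root a
  have h2 : T.parent^[k] a = a := Function.iterate_fixed h k
  rw [h2] at hk; exact hk

/-- The graph on the nodes of `T` whose edges are exactly the heavy edges. -/
def heavyGraph (T : RTree n) (heavy : Fin n → Fin n) : SimpleGraph (Fin n) where
  Adj x y := (T.isChild x y ∧ heavy y = x) ∨ (T.isChild y x ∧ heavy x = y)
  symm := by constructor; intro x y h; tauto
  loopless := by
    constructor
    intro x h
    rcases h with ⟨⟨hne, hp⟩, _⟩ | ⟨⟨hne, hp⟩, _⟩ <;> exact hne (T.parent_fix_eq_root x hp)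

/-- `a` and `b` lie on the same heavy path of the heavy path decomposition. -/
def sameHP (T : RTree n) (heavy : Fin n → Fin n) (a b : Fin n) : Prop :=
  (T.heavyGraph heavy).Reachable a b

lemma exists_common_ancestor (T : RTree n) (a b : Fin n) :
    ∃ m, T.isAncestor (T.parent^[m] a) b := by
  refine ⟨T.depth a, T.depth b, ?_⟩
  have h1 : T.parent^[T.depth b] b = T.root := Nat.find_spec (T.reaches_root b)
  have h2 : T.parent^[T.depth a] a = T.root := Nat.find_spec (T.reaches_root a)
  rw [h1, h2]

/-- The lowest common ancestor of `a` and `b`. -/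
noncomputable def lca (T : RTree n) (a b : Fin n) : Fin n :=
  T.parent^[Nat.find (T.exists_common_ancestor a b)] a

/-- The vertex set of the unique simple path between `a` and `b` in `T`. -/
def pathSet (T : RTree n) (a b : Fin n) : Set (Fin n) :=
  {w | (T.isAncestor w a ∨ T.isAncestor w b) ∧ T.isAncestor (T.lca a b) w}

lemma self_mem_subtree (T : RTree n) (a : Fin n) : a ∈ T.subtree a := by
  simp only [subtree, Finset.mem_filter, Finset.mem_univ, true_and]
  exact ⟨0, rfl⟩

/-- The largest pre-order label in the subtree rooted at `a`. -/
noncomputable def rmostLeaf (T : RTree n) (a : Fin n) : Fin n :=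
  (T.subtree a).max' ⟨a, T.self_mem_subtree a⟩

/-- The labels `1..n` of `T` form a pre-order (DFS) labelling. -/
def IsPreorder (T : RTree n) : Prop :=
  (∀ v, v ≠ T.root → T.parent v < v) ∧
    (∀ u v w : Fin n, u < v → v < w → T.isAncestor u w → T.isAncestor u v)

/-- Number of light edges on the path from the root to `v`
(the level of the heavy path of `v` in the heavy path tree). -/
noncomputable def lightDepth (T : RTree n) (heavy : Fin n → Fin n) (v : Fin n) : ℕ :=
  ((Finset.range (T.depth v)).filter fun k => T.isLightTop heavy (T.parent^[k] v)).card

end RTree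

/-!
If neither path lies below `h₁`, then, since both reach down to a common vertex below `h₁`, the
vertex `h₁` is an interior vertex of both paths, so both paths use the edge from `h₁` to its
parent. That edge is light: were it heavy, the parent of `h₁` would lie on the heavy path of `h₁`
above its topmost vertex.
-/

namespace RTree

variable {n : ℕ} (T : RTree n)

lemma isAncestor_refl (a : Fin n) : T.isAncestor a a := ⟨0, rfl⟩

lemma isAncestor_trans {a b c : Fin n} (hab : T.isAncestor a b) (hbc : T.isAncestor b c) :
    T.isAncestor a c := by
  obtain ⟨j, rfl⟩ := hab
  obtain ⟨k, rfl⟩ := hbc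
  exact ⟨j + k, Function.iterate_add_apply _ _ _ _⟩

lemma root_isAncestor (v : Fin n) : T.isAncestor T.root v := T.reaches_root v

lemma isAncestor_total_of_isAncestor {a b z : Fin n} (ha : T.isAncestor a z)
    (hb : T.isAncestor b z) : T.isAncestor a b ∨ T.isAncestor b a := by
  obtain ⟨j, rfl⟩ := ha
  obtain ⟨k, rfl⟩ := hb
  rcases le_total j k with h | h
  · exact Or.inr ⟨k - j, by rw [← Function.iterate_add_apply, Nat.sub_add_cancel h]⟩
  · exact Or.inl ⟨j - k, by rw [← Function.iterate_add_apply, Nat.sub_add_cancel h]⟩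

lemma eq_root_of_iterate_eq_self {v : Fin n} {m : ℕ} (hm : 0 < m)
    (h : T.parent^[m] v = v) : v = T.root := by
  obtain ⟨d, hd⟩ := T.reaches_root v
  have hperiodic : T.parent^[d * m] v = v := (Function.IsPeriodicPt.const_mul h d).eq
  rw [← Nat.sub_add_cancel (Nat.le_mul_of_pos_right d hm), Function.iterate_add_apply, hd,
    Function.iterate_fixed T.parent_root] at hperiodic
  exact hperiodic.symm

lemma not_isAncestor_parent {v : Fin n} (hv : v ≠ T.root) : ¬ T.isAncestor v (T.parent v) :=
  fun ⟨k, hk⟩ => hv (T.eq_root_of_iterate_eq_self k.succ_pos hk)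

lemma isLightTop_of_forall_sameHP_isAncestor {heavy : Fin n → Fin n} {h : Fin n}
    (htop : ∀ w, T.sameHP heavy h w → T.isAncestor h w) (hroot : h ≠ T.root) :
    T.isLightTop heavy h := by
  refine ⟨hroot, fun hheavy => T.not_isAncestor_parent hroot (htop _ ?_)⟩
  exact SimpleGraph.Adj.reachable (Or.inl ⟨⟨hroot, rfl⟩, hheavy⟩)

lemma isAncestor_of_mem_pathSet {a b h x : Fin n} (hh : T.isAncestor h (T.lca a b))
    (hx : x ∈ T.pathSet a b) : T.isAncestor h x :=
  T.isAncestor_trans hh hx.2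

lemma mem_pathSet_ne_lca_of_not_isAncestor {a b h z : Fin n} (hz : z ∈ T.pathSet a b)
    (hhz : T.isAncestor h z) (hh : ¬ T.isAncestor h (T.lca a b)) :
    h ∈ T.pathSet a b ∧ h ≠ T.lca a b := by
  refine ⟨⟨hz.1.imp (T.isAncestor_trans hhz) (T.isAncestor_trans hhz), ?_⟩, ?_⟩
  · exact (T.isAncestor_total_of_isAncestor hhz hz.2).resolve_left hh
  · intro heq
    exact hh (heq ▸ T.isAncestor_refl h)

end RTree

theorem stmt16_general {n : ℕ} (T : RTree n) (heavy : Fin n → Fin n)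
    (l r s t h₁ : Fin n)
    (hint : (T.pathSet l r ∩ T.pathSet s t).Nonempty)
    (hnolight : ¬ ∃ x : Fin n, x ∈ T.pathSet l r ∧ x ≠ T.lca l r ∧
        x ∈ T.pathSet s t ∧ x ≠ T.lca s t ∧ T.isLightTop heavy x)
    (hH : T.pathSet l r ∩ T.pathSet s t ⊆ {w | T.sameHP heavy h₁ w})
    (htop : ∀ w, T.sameHP heavy h₁ w → T.isAncestor h₁ w) :
    (∀ x ∈ T.pathSet l r, T.isAncestor h₁ x) ∨ (∀ x ∈ T.pathSet s t, T.isAncestor h₁ x) := by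
  obtain ⟨z, hzP, hzQ⟩ := hint
  have hz : T.isAncestor h₁ z := htop z (hH ⟨hzP, hzQ⟩)
  by_cases hP : T.isAncestor h₁ (T.lca l r)
  · exact Or.inl fun _ => T.isAncestor_of_mem_pathSet hP
  by_cases hQ : T.isAncestor h₁ (T.lca s t)
  · exact Or.inr fun _ => T.isAncestor_of_mem_pathSet hQ
  obtain ⟨hmemP, hneP⟩ := T.mem_pathSet_ne_lca_of_not_isAncestor hzP hz hP
  obtain ⟨hmemQ, hneQ⟩ := T.mem_pathSet_ne_lca_of_not_isAncestor hzQ hz hQ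
  have hroot : h₁ ≠ T.root := by
    rintro rfl
    exact hP (T.root_isAncestor _)
  exact (hnolight ⟨h₁, hmemP, hneP, hmemQ, hneQ,
    T.isLightTop_of_forall_sameHP_isAncestor htop hroot⟩).elim

/-- let `P` (between `l, r`) and `Q` (between `s, t`) be intersecting paths
sharing no light edge, with their common vertices lying in the heavy path of `h₁`, where `h₁`
is the topmost (closest-to-root) vertex of that heavy path. Then at least one of `P, Q` is
entirely contained in the subtree rooted at `h₁`. -/
theorem stmt16 {n : ℕ} (T : RTree n) (heavy : Fin n → Fin n) (hh : T.IsHeavyChoice heavy)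
    (l r s t h₁ : Fin n)
    (hint : (T.pathSet l r ∩ T.pathSet s t).Nonempty)
    (hnolight : ¬ ∃ x : Fin n, x ∈ T.pathSet l r ∧ x ≠ T.lca l r ∧
        x ∈ T.pathSet s t ∧ x ≠ T.lca s t ∧ T.isLightTop heavy x)
    (hH : T.pathSet l r ∩ T.pathSet s t ⊆ {w | T.sameHP heavy h₁ w})
    (htop : ∀ w, T.sameHP heavy h₁ w → T.isAncestor h₁ w) :
    (∀ x ∈ T.pathSet l r, T.isAncestor h₁ x) ∨ (∀ x ∈ T.pathSet s t, T.isAncestor h₁ x) :=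
  stmt16_general T heavy l r s t h₁ hint hnolight hH htop
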